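/- Let R be a polynomial ring over a field, let x, y be independent linear forms, and let a, b ∈ R be homogeneous elements of positive degree such that x, y, a, b form a regular sequence. Then the ideal I = (x,y)^2 + (ax + by) is an (x,y)-primary ideal and R/I has multiplicity 2, i.e. the localization R_{(x,y)}/I_{(x,y)} has length 2. -/

import Mathlib

open CategoryTheory

universe u

/-- `projDimLE R n M` : `M` admits a projective resolution of length at most `n`. -/
def projDimLE (R : Type u) [Ring R] : ℕ → ModuleCat.{u} R → Prop
  | 0, M => Projective M
  | n+1, M => ∃ (P : ModuleCat.{u} R) (f : P ⟶ M), Projective P ∧ Function.Surjective f ∧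
      projDimLE R n (ModuleCat.of R (LinearMap.ker f.hom))

/-- The projective dimension of a module, as an extended natural number:
the least length of a projective resolution. -/
noncomputable def projDim (R : Type u) [Ring R] (M : ModuleCat.{u} R) : ℕ∞ :=
  sInf {n : ℕ∞ | ∃ k : ℕ, projDimLE R k M ∧ n = (k : ℕ∞)}

/-- The height of an ideal: the infimum of the heights of primes containing it. -/
noncomputable def idealHeight {R : Type u} [CommRing R] (I : Ideal R) : ℕ∞ :=
  ⨅ (P : PrimeSpectrum R) (_ : I ≤ P.asIdeal), Order.height P

/-- An ideal is unmixed if every associated prime of `R/I` has height equal to the height of `I`. -/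
def IsUnmixed {R : Type u} [CommRing R] (I : Ideal R) : Prop :=
  ∀ P ∈ associatedPrimes R (R ⧸ I), idealHeight P = idealHeight I

/-- The primary component of `I` at a prime `P`: the contraction of `I R_P` to `R`. -/
noncomputable def primaryComponent {R : Type u} [CommRing R] (I : Ideal R)
    (P : PrimeSpectrum R) : Ideal R :=
  (I.map (algebraMap R (Localization.AtPrime P.asIdeal))).comap
    (algebraMap R (Localization.AtPrime P.asIdeal))

/-- The unmixed part of `I`: the intersection of the primary components of `I`
at the minimal primes of minimal height. -/
noncomputable def unmixedPart {R : Type u} [CommRing R] (I : Ideal R) : Ideal R :=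
  ⨅ (P : PrimeSpectrum R)
    (_ : P.asIdeal ∈ I.minimalPrimes ∧ Order.height P = idealHeight I),
    primaryComponent I P

/-- The length of a module: the supremum of lengths of chains of submodules. -/
noncomputable def moduleLength (R : Type u) (M : Type u) [Ring R] [AddCommGroup M]
    [Module R M] : ℕ∞ :=
  Order.height (⊤ : Submodule R M)

/-- `HasMultiplicity m J d e` : the Hilbert–Samuel multiplicity of `R/J` (of dimension `d`)
with respect to `m` is `e`, i.e. `length (R/(J + m^t)) ~ e·t^d/d!` as `t → ∞`. -/
def HasMultiplicity {R : Type u} [CommRing R] (m J : Ideal R) (d e : ℕ) : Prop :=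
  Filter.Tendsto
    (fun t : ℕ => (d.factorial : ℝ) * ((moduleLength R (R ⧸ (J ⊔ m ^ t))).toNat : ℝ) / (t : ℝ) ^ d)
    Filter.atTop (nhds (e : ℝ))

/-- A module over a Noetherian local ring is Cohen–Macaulay if there is a regular sequence
on it, inside the maximal ideal, of length equal to its dimension. -/
def IsCohenMacaulayMod (R : Type u) [CommRing R] [IsLocalRing R] (M : Type u) [AddCommGroup M]
    [Module R M] : Prop :=
  ∃ rs : List R, (∀ x ∈ rs, x ∈ IsLocalRing.maximalIdeal R) ∧
    RingTheory.Sequence.IsRegular M rs ∧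
    (rs.length : WithBot ℕ∞) = ringKrullDim (R ⧸ Module.annihilator R M)

/-- A regular local ring: a Noetherian local ring whose maximal ideal is generated by
`dim R` elements. -/
def IsRegularLocal (R : Type u) [CommRing R] [IsLocalRing R] : Prop :=
  IsNoetherianRing R ∧ ∃ s : Finset R,
    Ideal.span (s : Set R) = IsLocalRing.maximalIdeal R ∧
    (s.card : WithBot ℕ∞) = ringKrullDim R


/-!
Write `P = (x, y)` and `I = P ^ 2 + (a x + b y)`. The ideal `P` is prime: it is the kernel of the
substitution `X i ↦ X i - α (X i) x - β (X i) y`, where `α, β` are linear functionals dual to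
`x, y`. If `r s ∈ I` with `s ∉ P`, then `r = f x + g y`, and regularity of `x, y` shows that
`s f, s g` are congruent to `h a, h b` modulo `P`; hence `f b - g a ∈ P`, and regularity of `a, b`
modulo `P` gives `(f, g) ≡ t (a, b)`, i.e. `r ∈ t (a x + b y) + P ^ 2 ⊆ I`. So `I` is `P`-primary.
In `R_P` the element `a` is a unit, so the maximal ideal is `I_P + (y)` and its square lies in
`I_P`; since `y ∉ I` for degree reasons, the only ideals above `I_P` are `I_P ⊂ P_P ⊂ R_P`.
-/

namespace Order

lemma coheight_eq_two_of_forall_gt {α : Type*} [PartialOrder α] [OrderTop α] {a b : α}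
    (hab : a < b) (hb : b < ⊤) (h : ∀ c, a < c → c = b ∨ c = ⊤) : coheight a = 2 := by
  have hb1 : coheight b ≤ 1 := by
    refine coheight_le_coe_iff.mpr fun c hbc ↦ ?_
    obtain rfl | rfl := h c (hab.trans hbc)
    · exact absurd hbc (lt_irrefl _)
    · simp
  refine le_antisymm (coheight_le_coe_iff.mpr fun c hac ↦ ?_) ?_
  · obtain rfl | rfl := h c hac
    · exact hb1.trans_lt (by norm_num)
    · simp
  · calc (2 : ℕ∞) = coheight (⊤ : α) + 1 + 1 := by simp; norm_num
      _ ≤ coheight b + 1 := by gcongr; exact coheight_add_one_le hb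
      _ ≤ coheight a := coheight_add_one_le hab

end Order

namespace IsLocalRing

variable {L : Type*} [CommRing L] [IsLocalRing L] {J : Ideal L} {z : L}

lemma eq_or_eq_maximalIdeal_or_eq_top_of_le (hm : maximalIdeal L = J ⊔ Ideal.span {z})
    (hsq : maximalIdeal L ^ 2 ≤ J) {Q : Ideal L} (hJQ : J ≤ Q) :
    Q = J ∨ Q = maximalIdeal L ∨ Q = ⊤ := by
  by_cases hQtop : Q = ⊤
  · exact .inr (.inr hQtop)
  have hQm : Q ≤ maximalIdeal L := le_maximalIdeal hQtop
  by_cases hQJ : Q ≤ J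
  · exact .inl (le_antisymm hQJ hJQ)
  refine .inr (.inl (le_antisymm hQm ?_))
  obtain ⟨q, hqQ, hqJ⟩ := SetLike.not_le_iff_exists.mp hQJ
  have hzm : z ∈ maximalIdeal L := hm ▸ Ideal.mem_sup_right (Ideal.mem_span_singleton_self z)
  obtain ⟨j, hj, w, hw, rfl⟩ := Submodule.mem_sup.mp (hm ▸ hQm hqQ)
  obtain ⟨c, rfl⟩ := Ideal.mem_span_singleton'.mp hw
  have hc : IsUnit c := by
    by_contra hc
    refine hqJ (J.add_mem hj (hsq ?_))
    rw [pow_two]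
    exact Ideal.mul_mem_mul ((mem_maximalIdeal c).mpr hc) hzm
  have hzQ : z ∈ Q := by
    rw [← Ideal.unit_mul_mem_iff_mem Q hc, show c * z = j + c * z - j by ring]
    exact Q.sub_mem hqQ (hJQ hj)
  rw [hm, sup_le_iff, Ideal.span_singleton_le_iff_mem]
  exact ⟨hJQ, hzQ⟩

lemma moduleLength_quotient_eq_two (hz : z ∉ J) (hm : maximalIdeal L = J ⊔ Ideal.span {z})
    (hsq : maximalIdeal L ^ 2 ≤ J) : moduleLength L (L ⧸ J) = 2 := by
  rw [moduleLength, ← Module.length_eq_height, Module.length_quotient]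
  have hJm : J < maximalIdeal L := by
    refine lt_of_le_of_ne (hm ▸ le_sup_left) fun h ↦ hz ?_
    exact h ▸ hm ▸ Ideal.mem_sup_right (Ideal.mem_span_singleton_self z)
  refine Order.coheight_eq_two_of_forall_gt hJm (maximalIdeal.isMaximal L).ne_top.lt_top
    fun Q hJQ ↦ ?_
  obtain h | h := eq_or_eq_maximalIdeal_or_eq_top_of_le hm hsq hJQ.le
  · exact absurd h hJQ.ne'
  · exact h

end IsLocalRing

lemma LinearIndependent.exists_biorthogonal {ι K V : Type*} [DecidableEq ι] [Field K]
    [AddCommGroup V] [Module K V] {v : ι → V} (hv : LinearIndependent K v) :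
    ∃ f : ι → Module.Dual K V, ∀ i j, f i (v j) = if j = i then 1 else 0 := by
  choose f hf using fun i ↦ LinearMap.exists_extend ((Module.Basis.span hv).coord i)
  refine ⟨f, fun i j ↦ ?_⟩
  have := congr($(hf i) ((Module.Basis.span hv) j))
  simpa [Module.Basis.span_apply, Finsupp.single_apply] using this

namespace MvPolynomial

section Field

variable {σ k : Type*} [Field k]

theorem isPrime_span_pair {x y : MvPolynomial σ k} (hx : x.IsHomogeneous 1)
    (hy : y.IsHomogeneous 1) (hxy : LinearIndependent k ![x, y]) :
    (Ideal.span {x, y}).IsPrime := by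
  obtain ⟨f, hf⟩ := hxy.exists_biorthogonal
  obtain ⟨⟨hfx₀, hfy₀⟩, hfx₁, hfy₁⟩ : (f 0 x = 1 ∧ f 0 y = 0) ∧ f 1 x = 0 ∧ f 1 y = 1 := by
    simpa [Fin.forall_fin_two] using hf
  set P : Ideal (MvPolynomial σ k) := Ideal.span {x, y}
  let ℓ : MvPolynomial σ k →ₗ[k] MvPolynomial σ k :=
    LinearMap.id - (f 0).smulRight x - (f 1).smulRight y
  let Φ : MvPolynomial σ k →ₐ[k] MvPolynomial σ k := aeval fun i ↦ ℓ (X i)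
  have hΦ : ∀ p, p.IsHomogeneous 1 → Φ p = ℓ p := by
    intro p hp
    refine LinearMap.eqOn_span' (f := Φ.toLinearMap) (g := ℓ) ?_
      (by rw [← homogeneousSubmodule_one_eq_span_X]; exact hp)
    rintro _ ⟨i, rfl⟩
    simp [Φ]
  have hmod : (Ideal.Quotient.mkₐ k P).comp Φ = Ideal.Quotient.mkₐ k P := by
    refine algHom_ext fun i ↦ ?_
    simp only [AlgHom.comp_apply, Φ, aeval_X, Ideal.Quotient.mkₐ_eq_mk, Ideal.Quotient.eq]
    exact Ideal.mem_span_pair.mpr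
      ⟨-C (f 0 (X i)), -C (f 1 (X i)), by simp [ℓ, smul_eq_C_mul]; ring⟩
  have hker : P = RingHom.ker Φ := by
    refine le_antisymm ?_ fun p hp ↦ ?_
    · rw [Ideal.span_le]
      rintro _ (rfl | rfl)
      · simp [hΦ _ hx, ℓ, hfx₀, hfx₁]
      · simp [hΦ _ hy, ℓ, hfy₀, hfy₁]
    · have := congr($hmod p)
      rwa [AlgHom.comp_apply, Ideal.Quotient.mkₐ_eq_mk, RingHom.mem_ker.mp hp, map_zero, eq_comm,
        Ideal.Quotient.eq_zero_iff_mem] at this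
  rw [hker]
  exact RingHom.ker_isPrime _

end Field

variable {σ k : Type*} [CommRing k]

lemma IsHomogeneous.mem_pow_idealOfVars {p : MvPolynomial σ k} {d : ℕ}
    (hp : p.IsHomogeneous d) : p ∈ idealOfVars σ k ^ d :=
  (mem_pow_idealOfVars_iff' d p).mpr fun _ hm ↦ hp.coeff_eq_zero hm.ne

lemma IsHomogeneous.mem_idealOfVars {p : MvPolynomial σ k} {d : ℕ} (hp : p.IsHomogeneous d)
    (hd : d ≠ 0) : p ∈ idealOfVars σ k :=
  Ideal.pow_le_self hd hp.mem_pow_idealOfVars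

lemma IsHomogeneous.notMem_pow_two_idealOfVars {p : MvPolynomial σ k} (hp : p.IsHomogeneous 1)
    (hp0 : p ≠ 0) : p ∉ idealOfVars σ k ^ 2 := fun h ↦ hp0 <| by
  ext m
  by_cases hm : m.degree = 1
  · exact (mem_pow_idealOfVars_iff' 2 p).mp h m (by omega)
  · exact hp.coeff_eq_zero hm

end MvPolynomial

open RingTheory.Sequence

lemma RingTheory.Sequence.IsWeaklyRegular.isSMulRegular_quotient {R : Type*} [CommRing R]
    {rs : List R} (h : IsWeaklyRegular R rs) {i : ℕ} (hi : i < rs.length) {Q : Ideal R}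
    (hQ : Ideal.ofList (rs.take i) = Q) : IsSMulRegular (R ⧸ Q) rs[i] := by
  have e : (Ideal.ofList (rs.take i) • ⊤ : Submodule R R) = Q := by
    rw [smul_eq_mul, Ideal.mul_top, hQ]
  exact e ▸ h.regular_mod_prev i hi

section

variable {R : Type*} [CommRing R]

lemma notMem_of_isSMulRegular_quotient {Q : Ideal R} {a : R} (hQ : Q ≠ ⊤)
    (ha : IsSMulRegular (R ⧸ Q) a) : a ∉ Q := fun haQ ↦
  hQ <| (Ideal.eq_top_iff_one Q).mpr <|
    mem_of_isSMulRegular_quotient_of_smul_mem ha (by simpa using haQ)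

/-- Exactness of the Koszul complex of a regular pair, modulo `Q`. -/
lemma exists_add_mem_and_sub_mem_of_mul_add_mul_mem {Q : Ideal R} {x y f g : R}
    (hx : IsSMulRegular (R ⧸ Q) x) (hy : IsSMulRegular (R ⧸ (Q ⊔ Ideal.span {x})) y)
    (h : f * x + g * y ∈ Q) : ∃ w, f + w * y ∈ Q ∧ g - w * x ∈ Q := by
  have hg : g ∈ Q ⊔ Ideal.span {x} := by
    refine mem_of_isSMulRegular_quotient_of_smul_mem hy ?_
    rw [smul_eq_mul, show y * g = (f * x + g * y) - f * x by ring]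
    exact Ideal.sub_mem _ (Ideal.mem_sup_left h)
      (Ideal.mem_sup_right (Ideal.mul_mem_left _ _ (Ideal.mem_span_singleton_self x)))
  obtain ⟨q, hq, _, hw, rfl⟩ := Submodule.mem_sup.mp hg
  obtain ⟨w, rfl⟩ := Ideal.mem_span_singleton'.mp hw
  refine ⟨w, mem_of_isSMulRegular_quotient_of_smul_mem hx ?_, by simpa using hq⟩
  rw [smul_eq_mul, show x * (f + w * y) = (f * x + (q + w * x) * y) - q * y by ring]
  exact Q.sub_mem h (Q.mul_mem_right _ hq)

variable {x y a b : R}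

lemma mem_span_pair_of_mul_add_mul_mem_pow_two (hxy : IsWeaklyRegular R [x, y]) {f g : R}
    (h : f * x + g * y ∈ Ideal.span {x, y} ^ 2) :
    f ∈ Ideal.span {x, y} ∧ g ∈ Ideal.span {x, y} := by
  have hx : IsSMulRegular (R ⧸ (⊥ : Ideal R)) x :=
    hxy.isSMulRegular_quotient (i := 0) (by simp) (by simp)
  have hy : IsSMulRegular (R ⧸ ((⊥ : Ideal R) ⊔ Ideal.span {x})) y :=
    hxy.isSMulRegular_quotient (i := 1) (by simp) (by simp)
  rw [pow_two, Ideal.span_insert, Ideal.sup_mul, Submodule.mem_sup] at h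
  obtain ⟨_, hxu, _, hyv, huv⟩ := h
  obtain ⟨u, hu, rfl⟩ := Ideal.mem_span_singleton_mul.mp hxu
  obtain ⟨v, hv, rfl⟩ := Ideal.mem_span_singleton_mul.mp hyv
  obtain ⟨w, hf, hg⟩ := exists_add_mem_and_sub_mem_of_mul_add_mul_mem hx hy
    (f := f - u) (g := g - v) (by rw [Ideal.mem_bot]; linear_combination -huv)
  rw [Ideal.mem_bot] at hf hg
  rw [← Ideal.span_insert] at hu hv
  constructor
  · rw [show f = u - w * y by linear_combination hf]
    exact sub_mem hu (Ideal.mul_mem_left _ _ (Ideal.subset_span (by simp)))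
  · rw [show g = v + w * x by linear_combination hg]
    exact add_mem hv (Ideal.mul_mem_left _ _ (Ideal.subset_span (by simp)))

lemma span_sq_add_eq :
    Ideal.span {x ^ 2, x * y, y ^ 2, a * x + b * y} =
      Ideal.span {x, y} ^ 2 ⊔ Ideal.span {a * x + b * y} := by
  rw [pow_two (Ideal.span _), Ideal.span_mul_span', ← Ideal.span_union]
  congr 1
  ext z
  simp only [Set.mem_insert_iff, Set.mem_singleton_iff, Set.mem_union, Set.mem_mul]
  constructor
  · rintro (rfl | rfl | rfl | rfl)
    · exact .inl ⟨x, .inl rfl, x, .inl rfl, (pow_two x).symm⟩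
    · exact .inl ⟨x, .inl rfl, y, .inr rfl, rfl⟩
    · exact .inl ⟨y, .inr rfl, y, .inr rfl, (pow_two y).symm⟩
    · exact .inr rfl
  · rintro ((⟨u, rfl | rfl, v, rfl | rfl, rfl⟩) | rfl)
    all_goals simp [pow_two, mul_comm]

lemma span_sq_add_le_span_pair :
    Ideal.span {x, y} ^ 2 ⊔ Ideal.span {a * x + b * y} ≤ Ideal.span {x, y} :=
  sup_le (Ideal.pow_le_self two_ne_zero)
    (Ideal.span_singleton_le_iff_mem _ |>.mpr (Ideal.mem_span_pair.mpr ⟨a, b, rfl⟩))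

lemma span_sq_add_le_pow_two {M : Ideal R} (hx : x ∈ M) (hy : y ∈ M) (ha : a ∈ M)
    (hb : b ∈ M) : Ideal.span {x, y} ^ 2 ⊔ Ideal.span {a * x + b * y} ≤ M ^ 2 := by
  refine sup_le (Ideal.pow_right_mono ?_ 2) ((Ideal.span_singleton_le_iff_mem _).mpr ?_)
  · rw [Ideal.span_le]
    rintro _ (rfl | rfl) <;> assumption
  · rw [pow_two]
    exact add_mem (Ideal.mul_mem_mul ha hx) (Ideal.mul_mem_mul hb hy)

lemma radical_span_sq_add (hP : (Ideal.span {x, y}).IsPrime) :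
    (Ideal.span {x, y} ^ 2 ⊔ Ideal.span {a * x + b * y}).radical = Ideal.span {x, y} := by
  refine le_antisymm (hP.radical_le_iff.mpr span_sq_add_le_span_pair) ?_
  calc Ideal.span {x, y} = (Ideal.span {x, y} ^ 2).radical := by
        rw [Ideal.radical_pow _ two_ne_zero, hP.radical]
    _ ≤ _ := Ideal.radical_mono le_sup_left

lemma mem_span_sq_add_of_mul_mem (hP : (Ideal.span {x, y}).IsPrime)
    (hreg : IsWeaklyRegular R [x, y, a, b]) {r s : R}
    (hrs : r * s ∈ Ideal.span {x, y} ^ 2 ⊔ Ideal.span {a * x + b * y})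
    (hs : s ∉ Ideal.span {x, y}) :
    r ∈ Ideal.span {x, y} ^ 2 ⊔ Ideal.span {a * x + b * y} := by
  set P := Ideal.span {x, y}
  have ha : IsSMulRegular (R ⧸ P) a :=
    hreg.isSMulRegular_quotient (i := 2) (by simp) (by simp [P, Ideal.span_insert])
  have hb : IsSMulRegular (R ⧸ (P ⊔ Ideal.span {a})) b :=
    hreg.isSMulRegular_quotient (i := 3) (by simp) (by simp [P, Ideal.span_insert, sup_assoc])
  obtain ⟨f, g, rfl⟩ := Ideal.mem_span_pair.mp
    ((hP.mem_or_mem (span_sq_add_le_span_pair hrs)).resolve_right hs)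
  obtain ⟨p, hp, _, hq, hpq⟩ := Submodule.mem_sup.mp hrs
  obtain ⟨h, rfl⟩ := Ideal.mem_span_singleton'.mp hq
  obtain ⟨hf, hg⟩ := mem_span_pair_of_mul_add_mul_mem_pow_two
    ((isWeaklyRegular_append_iff R [x, y] [a, b]).mp hreg).1
    (f := s * f - h * a) (g := s * g - h * b) (by convert hp using 1; linear_combination -hpq)
  have hfg : f * b - g * a ∈ P := by
    refine (hP.mem_or_mem ?_).resolve_left hs
    rw [show s * (f * b - g * a) = b * (s * f - h * a) - a * (s * g - h * b) by ring]
    exact P.sub_mem (P.mul_mem_left _ hf) (P.mul_mem_left _ hg)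
  obtain ⟨t, hgt, hft⟩ := exists_add_mem_and_sub_mem_of_mul_add_mul_mem ha hb
    (f := -g) (g := f) (by convert hfg using 1; ring)
  have hxP : x ∈ P := Ideal.subset_span (by simp)
  have hyP : y ∈ P := Ideal.subset_span (by simp)
  rw [show f * x + g * y = (f - t * a) * x - (-g + t * b) * y + t * (a * x + b * y) by ring]
  refine add_mem (Ideal.mem_sup_left ?_)
    (Ideal.mem_sup_right (Ideal.mul_mem_left _ _ (Ideal.mem_span_singleton_self _)))
  rw [pow_two]
  exact sub_mem (Ideal.mul_mem_mul hft hxP) (Ideal.mul_mem_mul hgt hyP)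

lemma isPrimary_span_sq_add (hP : (Ideal.span {x, y}).IsPrime)
    (hreg : IsWeaklyRegular R [x, y, a, b]) :
    (Ideal.span {x, y} ^ 2 ⊔ Ideal.span {a * x + b * y}).IsPrimary := by
  refine Ideal.isPrimary_iff.mpr ⟨ne_top_of_le_ne_top hP.ne_top span_sq_add_le_span_pair,
    fun {r s} hrs ↦ ?_⟩
  by_cases hs : s ∈ Ideal.span {x, y}
  · exact .inr ((radical_span_sq_add hP).symm ▸ hs)
  · exact .inl (mem_span_sq_add_of_mul_mem hP hreg hrs hs)

lemma moduleLength_localization_quotient_span_sq_add [hP : (Ideal.span {x, y}).IsPrime]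
    (hreg : IsWeaklyRegular R [x, y, a, b])
    (hy : y ∉ Ideal.span {x, y} ^ 2 ⊔ Ideal.span {a * x + b * y}) :
    moduleLength (Localization.AtPrime (Ideal.span {x, y}))
      (Localization.AtPrime (Ideal.span {x, y}) ⧸
        (Ideal.span {x, y} ^ 2 ⊔ Ideal.span {a * x + b * y}).map
          (algebraMap R (Localization.AtPrime (Ideal.span {x, y})))) = 2 := by
  set P := Ideal.span {x, y}
  set I := P ^ 2 ⊔ Ideal.span {a * x + b * y}
  set L := Localization.AtPrime P
  set φ := algebraMap R L
  have hIP : I ≤ P := span_sq_add_le_span_pair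
  have ha : IsUnit (φ a) := IsLocalization.map_units L (M := P.primeCompl)
    ⟨a, notMem_of_isSMulRegular_quotient hP.ne_top
      (hreg.isSMulRegular_quotient (i := 2) (by simp) (by simp [P, Ideal.span_insert]))⟩
  have hm : IsLocalRing.maximalIdeal L = P.map φ := Localization.AtPrime.map_eq_maximalIdeal.symm
  refine IsLocalRing.moduleLength_quotient_eq_two (z := φ y) (fun h ↦ hy ?_) ?_ ?_
  · have hdisj : Disjoint (P.primeCompl : Set R) I :=
      Set.disjoint_left.mpr fun _ hs hsI ↦ hs (hIP hsI)
    exact (IsLocalization.under_map_of_isPrimary_disjoint P.primeCompl L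
      (isPrimary_span_sq_add hP hreg) hdisj).le h
  · refine hm ▸ le_antisymm ?_ (sup_le (Ideal.map_mono hIP) ?_)
    · rw [Ideal.map_le_iff_le_comap, Ideal.span_le, Set.insert_subset_iff,
        Set.singleton_subset_iff]
      constructor
      · rw [SetLike.mem_coe, Ideal.mem_comap, ← Ideal.unit_mul_mem_iff_mem _ ha,
          show φ a * φ x = φ (a * x + b * y) - φ b * φ y by simp]
        exact sub_mem (Ideal.mem_sup_left (Ideal.mem_map_of_mem φ
          (Ideal.mem_sup_right (Ideal.mem_span_singleton_self _))))
          (Ideal.mem_sup_right (Ideal.mul_mem_left _ _ (Ideal.mem_span_singleton_self _)))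
      · exact Ideal.mem_sup_right (Ideal.mem_span_singleton_self _)
    · exact Ideal.span_singleton_le_iff_mem _ |>.mpr
        (Ideal.mem_map_of_mem φ (Ideal.subset_span (by simp)))
  · rw [hm, ← Ideal.map_pow]
    exact Ideal.map_mono le_sup_left

end

open MvPolynomial RingTheory.Sequence in
theorem stmt7 {k : Type} [Field k] (n : ℕ)
    (x y a b : MvPolynomial (Fin n) k)
    (hx : x.IsHomogeneous 1) (hy : y.IsHomogeneous 1)
    (hindep : LinearIndependent k ![x, y])
    (da db : ℕ) (hda : 1 ≤ da) (hdb : 1 ≤ db)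
    (ha : a.IsHomogeneous da) (hb : b.IsHomogeneous db)
    (hreg : IsRegular (MvPolynomial (Fin n) k) [x, y, a, b]) :
    (Ideal.span {x ^ 2, x * y, y ^ 2, a * x + b * y}).radical = Ideal.span {x, y} ∧
    (Ideal.span {x ^ 2, x * y, y ^ 2, a * x + b * y}).IsPrimary ∧
    ∀ (hP : (Ideal.span ({x, y} : Set (MvPolynomial (Fin n) k))).IsPrime),
      haveI := hP
      moduleLength (Localization.AtPrime (Ideal.span ({x, y} : Set (MvPolynomial (Fin n) k))))
        (Localization.AtPrime (Ideal.span ({x, y} : Set (MvPolynomial (Fin n) k))) ⧸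
          (Ideal.span {x ^ 2, x * y, y ^ 2, a * x + b * y}).map
            (algebraMap (MvPolynomial (Fin n) k)
              (Localization.AtPrime (Ideal.span ({x, y} : Set (MvPolynomial (Fin n) k)))))) = 2 := by
  have hP := isPrime_span_pair hx hy hindep
  have hyI : y ∉ Ideal.span {x, y} ^ 2 ⊔ Ideal.span {a * x + b * y} := fun h ↦
    hy.notMem_pow_two_idealOfVars (by simpa using hindep.ne_zero 1) <|
      span_sq_add_le_pow_two (hx.mem_idealOfVars one_ne_zero) (hy.mem_idealOfVars one_ne_zero)
        (ha.mem_idealOfVars (by omega)) (hb.mem_idealOfVars (by omega)) h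
  rw [span_sq_add_eq]
  exact ⟨radical_span_sq_add hP, isPrimary_span_sq_add hP hreg.toIsWeaklyRegular,
    fun _ ↦ moduleLength_localization_quotient_span_sq_add hreg.toIsWeaklyRegular hyI⟩
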